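/- arXiv:1403.6706 — 2 statements merged into one kernel-verified Lean document; each statement's English description precedes it below -/
import Mathlib

section
/- Let ρ(y) = sup_{u ∈ U} ( ⟨u, b + By⟩ − (1/2)⟨u, Mu⟩ ) with U = {u : Cu ≤ c} a nonempty polyhedron, M symmetric positive semidefinite. Then the Moreau envelope e_γ ρ with parameter γ > 0 is again a QS function with the same U, b, B, and modified matrix M̄ = M + γ B Bᵀ, i.e., e_γ ρ(y) = sup_{u ∈ U} ( ⟨u, b + By⟩ − (1/2)⟨u, (M + γBBᵀ)u⟩ ). -/
/-!
Completing the square in `x` gives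
`(1/2γ)‖x - y‖² + ⟨u, b + Bx⟩ - ½⟨u, Mu⟩ = (1/2γ)‖x - y + γBᵀu‖² + ḡ(u)`,
where `ḡ(u) = ⟨u, b + By⟩ - ½⟨u, (M + γBBᵀ)u⟩`, so the envelope dominates `sup_U ḡ`.
For the reverse inequality one needs, for every `σ ≥ sup_U ḡ`, a single `v` with
`γ/2 ‖Bᵀu - v‖² + ḡ(u) ≤ σ` on all of `U`, and then takes `x = y - γv`. Since `ḡ` is
concave with curvature at least `γBBᵀ`, first-order optimality of a maximizer `a` of `ḡ` over
a truncation of `U` gives this bound with `v = Bᵀa` on that truncation, and compactness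
produces a `v` that works on all truncations at once.
-/

open Matrix Filter Topology

variable {ι κ : Type*} [Fintype ι] [Fintype κ]

theorem nonpos_of_forall_le_mul {D k : ℝ} (h : ∀ t : ℝ, 0 < t → t ≤ 1 → D ≤ t * k) : D ≤ 0 := by
  have hlim : Tendsto (fun t : ℝ => t * k) (𝓝[>] 0) (𝓝 0) := by
    simpa using ((continuous_mul_const k).tendsto 0).mono_left nhdsWithin_le_nhds
  refine ge_of_tendsto hlim ?_
  filter_upwards [Ioc_mem_nhdsGT one_pos] with t ht using h t ht.1 ht.2

theorem norm_le_sqrt_dotProduct_self (z : ι → ℝ) : ‖z‖ ≤ √(z ⬝ᵥ z) := by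
  refine (pi_norm_le_iff_of_nonneg (Real.sqrt_nonneg _)).2 fun i => ?_
  refine Real.abs_le_sqrt ?_
  simpa [dotProduct, sq] using
    Finset.single_le_sum (f := fun j => z j * z j) (fun j _ => mul_self_nonneg (z j))
      (Finset.mem_univ i)

omit [Fintype ι] in
theorem Matrix.PosSemidef.isSymm {M : Matrix ι ι ℝ} (hM : M.PosSemidef) : M.IsSymm :=
  (conjTranspose_eq_transpose_of_trivial M).symm.trans hM.isHermitian

omit [Fintype κ] in
theorem convex_polyhedron (C : Matrix κ ι ℝ) (c : κ → ℝ) :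
    Convex ℝ {u : ι → ℝ | ∀ i, (C *ᵥ u) i ≤ c i} :=
  (convex_Iic c).linear_preimage C.mulVecLin

omit [Fintype κ] in
theorem isClosed_polyhedron (C : Matrix κ ι ℝ) (c : κ → ℝ) :
    IsClosed {u : ι → ℝ | ∀ i, (C *ᵥ u) i ≤ c i} :=
  isClosed_Iic.preimage (f := (C *ᵥ ·)) (continuous_const.matrix_mulVec continuous_id)

theorem coe_add_biSup_le {α : Type*} {S : Set α} {f : α → ℝ} {r σ : ℝ}
    (h : ∀ u ∈ S, r + f u ≤ σ) : (r : EReal) + ⨆ u ∈ S, (f u : EReal) ≤ σ := by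
  have hsup : ⨆ u ∈ S, (f u : EReal) ≤ ((σ - r : ℝ) : EReal) :=
    iSup₂_le fun u hu => EReal.coe_le_coe_iff.2 (by linarith [h u hu])
  calc (r : EReal) + ⨆ u ∈ S, (f u : EReal) ≤ r + ((σ - r : ℝ) : EReal) := add_le_add_right hsup _
    _ = σ := by rw [← EReal.coe_add, add_sub_cancel]

/-- A QS penalty is `ρ(y) = sup_{u ∈ U} qsObjective (b + B y) M u`. -/
noncomputable def qsObjective (w : ι → ℝ) (Q : Matrix ι ι ℝ) (u : ι → ℝ) : ℝ :=
  u ⬝ᵥ w - 1 / 2 * (u ⬝ᵥ Q *ᵥ u)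

theorem qsObjective_add {Q : Matrix ι ι ℝ} (hQ : Q.IsSymm) (w a d : ι → ℝ) :
    qsObjective w Q (a + d) =
      qsObjective w Q a + d ⬝ᵥ (w - Q *ᵥ a) - 1 / 2 * (d ⬝ᵥ Q *ᵥ d) := by
  have hsymm : a ⬝ᵥ Q *ᵥ d = d ⬝ᵥ Q *ᵥ a := by
    simpa only [hQ.eq] using dotProduct_transpose_mulVec Q a d
  simp only [qsObjective, mulVec_add, add_dotProduct, dotProduct_add, dotProduct_sub, hsymm]
  ring

theorem continuous_qsObjective (w : ι → ℝ) (Q : Matrix ι ι ℝ) : Continuous (qsObjective w Q) := by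
  unfold qsObjective
  fun_prop

theorem qsObjective_add_half_le_of_isMaxOn {Q : Matrix ι ι ℝ} (hQ : Q.IsSymm) {w a u : ι → ℝ}
    {K : Set (ι → ℝ)} (hK : Convex ℝ K) (ha : a ∈ K) (hmax : IsMaxOn (qsObjective w Q) K a)
    (hu : u ∈ K) :
    qsObjective w Q u + 1 / 2 * ((u - a) ⬝ᵥ Q *ᵥ (u - a)) ≤ qsObjective w Q a := by
  set d := u - a
  have hslope : d ⬝ᵥ (w - Q *ᵥ a) ≤ 0 := by
    refine nonpos_of_forall_le_mul (k := 1 / 2 * (d ⬝ᵥ Q *ᵥ d)) fun t ht₀ ht₁ => ?_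
    have hle : qsObjective w Q (a + t • d) ≤ qsObjective w Q a :=
      hmax (hK.add_smul_sub_mem ha hu ⟨ht₀.le, ht₁⟩)
    rw [qsObjective_add hQ] at hle
    simp only [smul_dotProduct, mulVec_smul, dotProduct_smul, smul_eq_mul] at hle
    nlinarith
  have hu_eq : u = a + d := by simp [d]
  rw [hu_eq, qsObjective_add hQ]
  linarith

theorem dotProduct_mulVec_add_smul_mul_transpose (M : Matrix ι ι ℝ) (B : Matrix ι κ ℝ) (γ : ℝ)
    (d : ι → ℝ) :
    d ⬝ᵥ (M + γ • (B * Bᵀ)) *ᵥ d = d ⬝ᵥ M *ᵥ d + γ * (Bᵀ *ᵥ d ⬝ᵥ Bᵀ *ᵥ d) := by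
  rw [add_mulVec, smul_mulVec, ← mulVec_mulVec, dotProduct_add, dotProduct_smul,
    dotProduct_transpose_mulVec, smul_eq_mul]

variable {M : Matrix ι ι ℝ} {B : Matrix ι κ ℝ} {γ : ℝ} {w : ι → ℝ} {K : Set (ι → ℝ)}

theorem qsObjective_add_sq_le_of_isMaxOn (hM : M.PosSemidef) {a u : ι → ℝ}
    (hK : Convex ℝ K) (ha : a ∈ K) (hmax : IsMaxOn (qsObjective w (M + γ • (B * Bᵀ))) K a)
    (hu : u ∈ K) :
    γ / 2 * ((Bᵀ *ᵥ u - Bᵀ *ᵥ a) ⬝ᵥ (Bᵀ *ᵥ u - Bᵀ *ᵥ a)) + qsObjective w (M + γ • (B * Bᵀ)) u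
      ≤ qsObjective w (M + γ • (B * Bᵀ)) a := by
  have hQ : (M + γ • (B * Bᵀ)).IsSymm :=
    hM.isSymm.add (IsSymm.smul (by rw [IsSymm, transpose_mul, transpose_transpose]) γ)
  have hmax := qsObjective_add_half_le_of_isMaxOn hQ hK ha hmax hu
  rw [dotProduct_mulVec_add_smul_mul_transpose] at hmax
  rw [← mulVec_sub]
  have hMd : 0 ≤ (u - a) ⬝ᵥ M *ᵥ (u - a) := by
    simpa using hM.dotProduct_mulVec_nonneg (u - a)
  linarith

theorem sq_add_qsObjective_eq (hγ : γ ≠ 0) (b : ι → ℝ) (x y : κ → ℝ) (u : ι → ℝ) :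
    1 / (2 * γ) * ((x - y) ⬝ᵥ (x - y)) + qsObjective (b + B *ᵥ x) M u =
      1 / (2 * γ) * ((x - y + γ • Bᵀ *ᵥ u) ⬝ᵥ (x - y + γ • Bᵀ *ᵥ u)) +
        qsObjective (b + B *ᵥ y) (M + γ • (B * Bᵀ)) u := by
  have hB (z : κ → ℝ) : u ⬝ᵥ B *ᵥ z = z ⬝ᵥ Bᵀ *ᵥ u := (dotProduct_transpose_mulVec B z u).symm
  have hBB : u ⬝ᵥ (B * Bᵀ) *ᵥ u = Bᵀ *ᵥ u ⬝ᵥ Bᵀ *ᵥ u := by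
    rw [← mulVec_mulVec, hB]
  simp only [qsObjective, add_mulVec, smul_mulVec, dotProduct_add, dotProduct_smul, hB, hBB,
    add_dotProduct, smul_dotProduct, sub_dotProduct, dotProduct_sub, smul_eq_mul]
  rw [dotProduct_comm (Bᵀ *ᵥ u) x, dotProduct_comm (Bᵀ *ᵥ u) y, dotProduct_comm y x]
  field_simp
  ring

/-- The admissible `v` for the truncations `K ∩ closedBall 0 r` form a decreasing sequence of
closed sets, nonempty by `qsObjective_add_sq_le_of_isMaxOn` applied to a maximizer over each
truncation, and bounded by the constraint at a fixed point of `K`. -/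
theorem exists_forall_sq_add_qsObjective_le (hM : M.PosSemidef) (hγ : 0 < γ)
    (hK : Convex ℝ K) (hKc : IsClosed K) (hKne : K.Nonempty) {σ : ℝ}
    (hσ : ∀ u ∈ K, qsObjective w (M + γ • (B * Bᵀ)) u ≤ σ) :
    ∃ v, ∀ u ∈ K,
      γ / 2 * ((Bᵀ *ᵥ u - v) ⬝ᵥ (Bᵀ *ᵥ u - v)) + qsObjective w (M + γ • (B * Bᵀ)) u ≤ σ := by
  obtain ⟨u₀, hu₀⟩ := hKne
  set g := qsObjective w (M + γ • (B * Bᵀ))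
  set trunc : ℕ → Set (ι → ℝ) := fun r => K ∩ Metric.closedBall 0 (‖u₀‖ + r)
  set F : ℕ → Set (κ → ℝ) := fun r =>
    {v | ∀ u ∈ trunc r, γ / 2 * ((Bᵀ *ᵥ u - v) ⬝ᵥ (Bᵀ *ᵥ u - v)) + g u ≤ σ}
  have hu₀_trunc (r : ℕ) : u₀ ∈ trunc r := ⟨hu₀, by simp⟩
  have hF_antitone (r : ℕ) : F (r + 1) ⊆ F r := fun v hv u hu =>
    hv u ⟨hu.1, Metric.closedBall_subset_closedBall (by push_cast; linarith) hu.2⟩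
  have hF_nonempty (r : ℕ) : (F r).Nonempty := by
    obtain ⟨a, ha, hmax⟩ := ((isCompact_closedBall _ _).inter_left hKc).exists_isMaxOn
      ⟨u₀, hu₀_trunc r⟩ (continuous_qsObjective _ _).continuousOn
    refine ⟨Bᵀ *ᵥ a, fun u hu => ?_⟩
    exact (qsObjective_add_sq_le_of_isMaxOn hM (hK.inter (convex_closedBall _ _))
      ha hmax hu).trans (hσ a ha.1)
  have hF_closed (r : ℕ) : IsClosed (F r) := by
    simp only [F, Set.ofPred_forall]
    exact isClosed_iInter fun u => isClosed_iInter fun _ =>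
      isClosed_le (by fun_prop) continuous_const
  have hF_bounded : Bornology.IsBounded (F 0) := by
    refine (Metric.isBounded_closedBall (x := Bᵀ *ᵥ u₀) (r := √(2 / γ * (σ - g u₀)))).subset
      fun v hv => ?_
    have hsq : (Bᵀ *ᵥ u₀ - v) ⬝ᵥ (Bᵀ *ᵥ u₀ - v) ≤ 2 / γ * (σ - g u₀) := by
      rw [div_mul_eq_mul_div, le_div_iff₀ hγ]
      linarith [hv u₀ (hu₀_trunc 0)]
    rw [Metric.mem_closedBall, dist_comm, dist_eq_norm]
    exact (norm_le_sqrt_dotProduct_self _).trans (Real.sqrt_le_sqrt hsq)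
  obtain ⟨v, hv⟩ := IsCompact.nonempty_iInter_of_sequence_nonempty_isCompact_isClosed F
    hF_antitone hF_nonempty (Metric.isCompact_of_isClosed_isBounded (hF_closed 0) hF_bounded)
    hF_closed
  refine ⟨v, fun u hu => Set.mem_iInter.1 hv ⌈‖u‖⌉₊ u ⟨hu, ?_⟩⟩
  rw [mem_closedBall_zero_iff]
  linarith [Nat.le_ceil ‖u‖, norm_nonneg u₀]

/-- Moreau–Yosida smoothing of a PLQ penalty stays in the PLQ class: the
envelope has the same `U`, `b`, `B`, and modified matrix `M + γBBᵀ`. -/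
theorem plq_moreau_envelope (m n ℓ : ℕ)
    (C : Matrix (Fin ℓ) (Fin m) ℝ) (c : Fin ℓ → ℝ)
    (M : Matrix (Fin m) (Fin m) ℝ) (hM : M.PosSemidef)
    (b : Fin m → ℝ) (B : Matrix (Fin m) (Fin n) ℝ)
    (hU_ne : {u : Fin m → ℝ | ∀ i, C.mulVec u i ≤ c i}.Nonempty)
    (γ : ℝ) (hγ : 0 < γ) (y : Fin n → ℝ) :
    (⨅ x : Fin n → ℝ,
        (((1 / (2 * γ)) * ∑ i, (x i - y i) ^ 2 : ℝ) : EReal) +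
          ⨆ u ∈ {u : Fin m → ℝ | ∀ i, C.mulVec u i ≤ c i},
            ((u ⬝ᵥ (b + B.mulVec x) - (1 / 2) * (u ⬝ᵥ M.mulVec u) : ℝ) : EReal)) =
      ⨆ u ∈ {u : Fin m → ℝ | ∀ i, C.mulVec u i ≤ c i},
        ((u ⬝ᵥ (b + B.mulVec y) -
          (1 / 2) * (u ⬝ᵥ (M + γ • (B * Bᵀ)).mulVec u) : ℝ) : EReal) := by
  set g := qsObjective (b + B *ᵥ y) (M + γ • (B * Bᵀ))
  have henv (x : Fin n → ℝ) (u : Fin m → ℝ) :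
      1 / (2 * γ) * ∑ i, (x i - y i) ^ 2 + (u ⬝ᵥ (b + B *ᵥ x) - 1 / 2 * (u ⬝ᵥ M *ᵥ u)) =
        1 / (2 * γ) * ((x - y + γ • Bᵀ *ᵥ u) ⬝ᵥ (x - y + γ • Bᵀ *ᵥ u)) + g u := by
    rw [← sq_add_qsObjective_eq hγ.ne']
    simp only [qsObjective, dotProduct, Pi.sub_apply, sq]
  refine le_antisymm ?_ ?_
  · refine EReal.le_of_forall_lt_iff_le.1 fun σ hσ => ?_
    have hgσ (u) (hu : u ∈ {u : Fin m → ℝ | ∀ i, C.mulVec u i ≤ c i}) : g u ≤ σ :=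
      EReal.coe_le_coe_iff.1 ((le_biSup (fun u => (g u : EReal)) hu).trans hσ.le)
    obtain ⟨v, hv⟩ := exists_forall_sq_add_qsObjective_le hM hγ (convex_polyhedron C c)
      (isClosed_polyhedron C c) hU_ne hgσ
    refine iInf_le_of_le (y - γ • v) (coe_add_biSup_le fun u hu => ?_)
    have hshift : y - γ • v - y + γ • Bᵀ *ᵥ u = γ • (Bᵀ *ᵥ u - v) := by module
    rw [henv, hshift, smul_dotProduct, dotProduct_smul, smul_eq_mul, smul_eq_mul]
    convert hv u hu using 2
    field_simp
  · refine le_iInf fun x => iSup₂_le fun u hu => ?_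
    have hle : g u ≤ 1 / (2 * γ) * ∑ i, (x i - y i) ^ 2 +
        (u ⬝ᵥ (b + B *ᵥ x) - 1 / 2 * (u ⬝ᵥ M *ᵥ u)) := by
      rw [henv]
      exact le_add_of_nonneg_left (mul_nonneg (by positivity) (dotProduct_self_star_nonneg _))
    refine (EReal.coe_le_coe_iff.2 hle).trans ?_
    rw [EReal.coe_add]
    gcongr
    exact le_iSup₂_of_le u hu le_rfl
end

section
/- The quantile Huber function with parameters τ ∈ (0,1) and γ > 0, defined as the Moreau envelope of the quantile loss ρ_τ(r) = τ max(r,0) + (1−τ) max(−r,0), equals: (1−τ)|r| − γ(1−τ)²/2 for r ≤ −γ(1−τ); r²/(2γ) for −γ(1−τ) ≤ r ≤ γτ; and τ|r| − γτ²/2 for r ≥ γτ. -/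
/-!
Write `ρ_τ(x) = τ x + max(-x, 0)`, so that `s x ≤ ρ_τ(x)` for every slope `s ∈ [τ - 1, τ]`.
Completing the square, `(x - r)² / (2γ) + s x = (x - (r - γ s))² / (2γ) + s r - γ s² / 2`,
so any linear minorant `s x` of `g` gives `e_γ g(r) ≥ s r - γ s² / 2`, with equality when the
minorant touches `g` at `r - γ s`. The three regimes of the formula are the slopes `s = τ - 1`,
`s = r / γ` (touching at `0`) and `s = τ`.
-/

open Set

noncomputable section

def moreauEnvelope (γ : ℝ) (g : ℝ → ℝ) (r : ℝ) : ℝ :=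
  ⨅ x, 1 / (2 * γ) * (x - r) ^ 2 + g x

def quantileLoss (τ x : ℝ) : ℝ :=
  τ * max x 0 + (1 - τ) * max (-x) 0

end

theorem moreauEnvelope_eq_of_linear_minorant {γ s r : ℝ} {g : ℝ → ℝ} (hγ : 0 < γ)
    (hg : ∀ x, s * x ≤ g x) (hg_touch : g (r - γ * s) = s * (r - γ * s)) :
    moreauEnvelope γ g r = s * r - γ * s ^ 2 / 2 := by
  have complete_square : ∀ x, 1 / (2 * γ) * (x - r) ^ 2 + s * x =
      1 / (2 * γ) * (x - (r - γ * s)) ^ 2 + (s * r - γ * s ^ 2 / 2) := by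
    intro x
    field_simp
    ring
  refine ciInf_eq_of_forall_ge_of_forall_gt_exists_lt (fun x => ?_)
    fun w hw => ⟨r - γ * s, ?_⟩
  · calc s * r - γ * s ^ 2 / 2
        ≤ 1 / (2 * γ) * (x - (r - γ * s)) ^ 2 + (s * r - γ * s ^ 2 / 2) :=
          le_add_of_nonneg_left (by positivity)
      _ = 1 / (2 * γ) * (x - r) ^ 2 + s * x := (complete_square x).symm
      _ ≤ 1 / (2 * γ) * (x - r) ^ 2 + g x := by gcongr; exact hg x
  · rwa [hg_touch, complete_square, sub_self, zero_pow two_ne_zero, mul_zero, zero_add]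

theorem quantileLoss_eq_mul_add_max (τ x : ℝ) : quantileLoss τ x = τ * x + max (-x) 0 := by
  rw [quantileLoss]
  linear_combination τ * max_zero_sub_max_neg_zero_eq_self x

theorem quantileLoss_of_nonneg (τ : ℝ) {x : ℝ} (hx : 0 ≤ x) : quantileLoss τ x = τ * x := by
  simp [quantileLoss_eq_mul_add_max, hx]

theorem quantileLoss_of_nonpos (τ : ℝ) {x : ℝ} (hx : x ≤ 0) :
    quantileLoss τ x = (τ - 1) * x := by
  rw [quantileLoss_eq_mul_add_max, max_eq_left (neg_nonneg.mpr hx)]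
  ring

theorem mul_le_quantileLoss {τ s : ℝ} (hs : s ∈ Icc (τ - 1) τ) (x : ℝ) :
    s * x ≤ quantileLoss τ x := by
  obtain ⟨hs₁, hs₂⟩ := hs
  rcases le_total 0 x with hx | hx
  · rw [quantileLoss_of_nonneg τ hx]
    exact mul_le_mul_of_nonneg_right hs₂ hx
  · rw [quantileLoss_of_nonpos τ hx]
    exact mul_le_mul_of_nonpos_right hs₁ hx

/-- The quantile Huber function (`τ ∈ (0,1)`, `γ > 0`), i.e. the Moreau
envelope of the quantile loss, is given piecewise as stated. -/
theorem quantile_huber_formula (τ γ : ℝ) (hτ : τ ∈ Set.Ioo (0 : ℝ) 1) (hγ : 0 < γ)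
    (r : ℝ) :
    (⨅ x : ℝ, (1 / (2 * γ)) * (x - r) ^ 2 + (τ * max x 0 + (1 - τ) * max (-x) 0)) =
      if r ≤ -γ * (1 - τ) then (1 - τ) * |r| - γ * (1 - τ) ^ 2 / 2
      else if r ≤ γ * τ then r ^ 2 / (2 * γ)
      else τ * |r| - γ * τ ^ 2 / 2 := by
  obtain ⟨hτ₀, hτ₁⟩ := hτ
  change moreauEnvelope γ (quantileLoss τ) r = _
  split_ifs with h_left h_mid
  · rw [abs_of_nonpos (by nlinarith), moreauEnvelope_eq_of_linear_minorant hγ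
      (mul_le_quantileLoss ⟨le_rfl, by linarith⟩) (quantileLoss_of_nonpos τ (by linarith))]
    ring
  · have h_slope : r / γ ∈ Icc (τ - 1) τ := by
      constructor
      · rw [le_div_iff₀ hγ]; linarith
      · rw [div_le_iff₀ hγ]; linarith
    have h_root : r - γ * (r / γ) = 0 := by field_simp; ring
    rw [moreauEnvelope_eq_of_linear_minorant hγ (mul_le_quantileLoss h_slope)
      (by rw [h_root, quantileLoss_of_nonneg τ le_rfl, mul_zero, mul_zero])]
    field_simp
    ring
  · rw [abs_of_nonneg (by nlinarith), moreauEnvelope_eq_of_linear_minorant hγ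
      (mul_le_quantileLoss ⟨by linarith, le_rfl⟩) (quantileLoss_of_nonneg τ (by linarith))]
end
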